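/- arXiv:0908.2044 — 4 statements merged into one kernel-verified Lean document; each statement's English description precedes it below -/
import Mathlib

section
/- Work in ℝ⁴ with the Minkowski bilinear form ⟪x, y⟫ = −(x 0)(y 0) + (x 1)(y 1) + (x 2)(y 2) + (x 3)(y 3) and Q x = ⟪x, x⟫. Let p, d ∈ ℝ⁴ with Q d < 0 (d timelike), and suppose the line {p + t • d : t ∈ ℝ} does not pass through the origin (p + t • d ≠ 0 for all t ∈ ℝ). Then there exists exactly one point u on this line satisfying Q u = 0 and u 0 > 0; that is, a timelike line avoiding the origin meets the upper half of the light cone in a unique point. (Key step in the proof of the paper's Lemma 3.3.) -/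
/-- The Minkowski bilinear form on `ℝ⁴`. -/
def mink (x y : Fin 4 → ℝ) : ℝ :=
  -(x 0 * y 0) + x 1 * y 1 + x 2 * y 2 + x 3 * y 3

private lemma mink_pos_of_zero0 (v : Fin 4 → ℝ) (h0 : v 0 = 0) (hv : v ≠ 0) :
    0 < mink v v := by
  have h : mink v v = v 1 * v 1 + v 2 * v 2 + v 3 * v 3 := by
    simp [mink, h0]
  rw [h]
  by_contra hle
  push_neg at hle
  have h1 : v 1 = 0 := by nlinarith [mul_self_nonneg (v 1), mul_self_nonneg (v 2), mul_self_nonneg (v 3)]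
  have h2 : v 2 = 0 := by nlinarith [mul_self_nonneg (v 1), mul_self_nonneg (v 2), mul_self_nonneg (v 3)]
  have h3 : v 3 = 0 := by nlinarith [mul_self_nonneg (v 1), mul_self_nonneg (v 2), mul_self_nonneg (v 3)]
  apply hv
  funext i
  fin_cases i <;> simp [h0, h1, h2, h3]

private lemma key_lemma (p d : Fin 4 → ℝ) (r₁ r₂ : ℝ)
    (hroot : ∀ t : ℝ, mink (p + t • d) (p + t • d) = 0 ↔ t = r₁ ∨ t = r₂)
    (h1 : 0 < (p + r₁ • d) 0) (h2 : (p + r₂ • d) 0 ≤ 0) :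
    ∃! u : Fin 4 → ℝ,
      (∃ t : ℝ, u = p + t • d) ∧ mink u u = 0 ∧ 0 < u 0 := by
  refine ⟨p + r₁ • d, ⟨⟨r₁, rfl⟩, (hroot r₁).2 (Or.inl rfl), h1⟩, ?_⟩
  rintro v ⟨⟨s, rfl⟩, hQv, hv0⟩
  rcases (hroot s).1 hQv with h | h
  · rw [h]
  · rw [h] at hv0; linarith

/-- A timelike line avoiding the origin meets the upper half of the light
cone in exactly one point (key step in the paper's Lemma 3.3). -/
theorem stmt_5 (p d : Fin 4 → ℝ)
    (hd : mink d d < 0)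
    (hline : ∀ t : ℝ, p + t • d ≠ 0) :
    ∃! u : Fin 4 → ℝ,
      (∃ t : ℝ, u = p + t • d) ∧ mink u u = 0 ∧ 0 < u 0 := by
  set a := mink d d with ha_def
  set b := 2 * mink p d with hb_def
  set c := mink p p with hc_def
  have ha : a < 0 := hd
  have ha' : a ≠ 0 := ne_of_lt ha
  have hquad : ∀ t : ℝ, mink (p + t • d) (p + t • d) = a * t ^ 2 + b * t + c := by
    intro t
    simp only [ha_def, hb_def, hc_def, mink, Pi.add_apply, Pi.smul_apply, smul_eq_mul]
    ring
  -- d 0 ≠ 0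
  have hd' : -(d 0 * d 0) + d 1 * d 1 + d 2 * d 2 + d 3 * d 3 < 0 := hd
  have hd0 : d 0 ≠ 0 := by
    intro h
    rw [h] at hd'
    nlinarith [mul_self_nonneg (d 1), mul_self_nonneg (d 2), mul_self_nonneg (d 3)]
  -- the time where the time coordinate vanishes
  set t₀ : ℝ := -(p 0) / d 0 with ht₀_def
  have hv0 : (p + t₀ • d) 0 = 0 := by
    simp only [Pi.add_apply, Pi.smul_apply, smul_eq_mul, ht₀_def]
    field_simp
    ring
  have hqt₀ : 0 < a * t₀ ^ 2 + b * t₀ + c := by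
    rw [← hquad]
    exact mink_pos_of_zero0 _ hv0 (hline t₀)
  -- positive discriminant
  have hdisc : 0 < b ^ 2 - 4 * a * c := by
    nlinarith [sq_nonneg (2 * a * t₀ + b), mul_neg_of_neg_of_pos ha hqt₀]
  set s : ℝ := Real.sqrt (b ^ 2 - 4 * a * c) with hs_def
  have hs2 : s * s = b ^ 2 - 4 * a * c := Real.mul_self_sqrt hdisc.le
  have hspos : 0 < s := Real.sqrt_pos.2 hdisc
  set r₁ : ℝ := (-b + s) / (2 * a) with hr₁_def
  set r₂ : ℝ := (-b - s) / (2 * a) with hr₂_def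
  have hroot : ∀ t : ℝ, mink (p + t • d) (p + t • d) = 0 ↔ t = r₁ ∨ t = r₂ := by
    intro t
    rw [hquad]
    have hdiscrim : discrim a b c = s * s := by rw [discrim]; linarith
    rw [pow_two]
    exact quadratic_eq_zero_iff ha' hdiscrim t
  -- factorization
  have hfac : ∀ t : ℝ, a * (t - r₁) * (t - r₂) = a * t ^ 2 + b * t + c := by
    intro t
    rw [hr₁_def, hr₂_def]
    field_simp
    nlinarith [hs2]
  -- (t₀ - r₁)(t₀ - r₂) < 0
  have hbet : (t₀ - r₁) * (t₀ - r₂) < 0 := by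
    have := hfac t₀
    nlinarith
  -- time coordinates at the roots
  have hg : ∀ r : ℝ, (p + r • d) 0 = d 0 * (r - t₀) := by
    intro r
    simp only [Pi.add_apply, Pi.smul_apply, smul_eq_mul, ht₀_def]
    field_simp
    ring
  have hprod : (p + r₁ • d) 0 * ((p + r₂ • d) 0) < 0 := by
    rw [hg r₁, hg r₂]
    have hd02 : 0 < d 0 * d 0 := mul_self_pos.2 hd0
    have heq : d 0 * (r₁ - t₀) * (d 0 * (r₂ - t₀)) = d 0 * d 0 * ((t₀ - r₁) * (t₀ - r₂)) := by ring
    rw [heq]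
    exact mul_neg_of_pos_of_neg hd02 hbet
  rcases lt_or_ge 0 ((p + r₁ • d) 0) with h | h
  · exact key_lemma p d r₁ r₂ hroot h (by nlinarith)
  · have h2 : 0 < (p + r₂ • d) 0 := by nlinarith
    have hroot' : ∀ t : ℝ, mink (p + t • d) (p + t • d) = 0 ↔ t = r₂ ∨ t = r₁ := by
      intro t; rw [hroot t]; tauto
    exact key_lemma p d r₂ r₁ hroot' h2 h
end

section
/- Work in ℝ⁴ with the Minkowski bilinear form ⟪x, y⟫ = −(x 0)(y 0) + (x 1)(y 1) + (x 2)(y 2) + (x 3)(y 3) and Q x = ⟪x, x⟫. Let w₁, w₂, w₃ ∈ ℝ⁴ be linearly independent, and suppose there exists v ∈ ℝ⁴ with Q v = −1 and ⟪v, wᵢ⟫ = 0 for i = 1, 2, 3 (the three dual hyperbolic planes meet at the point v of the hyperboloid). Then for any positive reals c₁, c₂, c₃ there exists a unique u ∈ ℝ⁴ with Q u = 0, u 0 > 0, and ⟪u, wᵢ⟫ = cᵢ for i = 1, 2, 3. (This is the paper's Lemma 3.3 in the hyperboloid model: there is a unique truncated corner — i.e., a unique horosphere, encoded by the upper light-cone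 vector u — with prescribed Gauss image and heights hᵢ = log cᵢ.) -/
open Matrix

noncomputable def eta : Matrix (Fin 4) (Fin 4) ℝ := Matrix.diagonal ![-1,1,1,1]

lemma mink_eq_dot (x y : Fin 4 → ℝ) : mink x y = x ⬝ᵥ (eta *ᵥ y) := by
  simp [mink, eta, dotProduct, Matrix.mulVec_diagonal, Fin.sum_univ_four]

lemma mink_symm (x y : Fin 4 → ℝ) : mink x y = mink y x := by
  simp [mink]; ring

lemma eta_unit : IsUnit eta := by
  rw [Matrix.isUnit_iff_isUnit_det, eta, Matrix.det_diagonal]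
  simp [Fin.prod_univ_four]

noncomputable def minkL (v : Fin 4 → ℝ) : (Fin 4 → ℝ) →ₗ[ℝ] ℝ where
  toFun x := mink v x
  map_add' x y := by simp [mink]; ring
  map_smul' a x := by simp [mink]; ring

lemma mink_expand (x y : Fin 4 → ℝ) (t : ℝ) :
    mink (x - t • y) (x - t • y) = mink x x - 2*t*mink x y + t^2 * mink y y := by
  simp [mink]; ring

lemma key_lemma_s9 (v b : Fin 4 → ℝ) (h1 : mink v v = -1) (h2 : mink v b = 0) (h3 : b ≠ 0) :
    (b 0)^2 < mink b b * (v 0)^2 := by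
  simp only [mink] at h1 h2 ⊢
  have hv0 : 1 ≤ (v 0)^2 := by nlinarith [sq_nonneg (v 1), sq_nonneg (v 2), sq_nonneg (v 3)]
  have hv2 : (0:ℝ) < (v 0)^2 := lt_of_lt_of_le one_pos hv0
  rcases lt_or_eq_of_le (by positivity : (0:ℝ) ≤ b 1 ^ 2 + b 2 ^ 2 + b 3 ^ 2) with hSpos | hS0
  · have hD : v 0 * b 0 = v 1 * b 1 + v 2 * b 2 + v 3 * b 3 := by linarith
    have cauchy : (v 0 * b 0)^2 ≤ (v 1^2 + v 2^2 + v 3^2) * (b 1^2 + b 2^2 + b 3^2) := by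
      rw [hD]
      nlinarith [sq_nonneg (v 1 * b 2 - v 2 * b 1), sq_nonneg (v 1 * b 3 - v 3 * b 1),
        sq_nonneg (v 2 * b 3 - v 3 * b 2)]
    have hvsq : v 1^2 + v 2^2 + v 3^2 = (v 0)^2 - 1 := by ring_nf; ring_nf at h1; linarith
    rw [hvsq] at cauchy
    have step := mul_le_mul_of_nonneg_right cauchy (by positivity : (0:ℝ) ≤ 1 + (v 0)^2)
    nlinarith [step, hSpos, hv2, mul_pos hSpos hv2]
  · exfalso
    have sq0 : ∀ x : ℝ, x ^ 2 ≤ 0 → x = 0 := fun x h =>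
      pow_eq_zero_iff two_ne_zero |>.1 (le_antisymm h (sq_nonneg _))
    have e1 : b 1 = 0 := sq0 _ (by nlinarith [sq_nonneg (b 2), sq_nonneg (b 3)])
    have e2 : b 2 = 0 := sq0 _ (by nlinarith [sq_nonneg (b 1), sq_nonneg (b 3)])
    have e3 : b 3 = 0 := sq0 _ (by nlinarith [sq_nonneg (b 1), sq_nonneg (b 2)])
    have hv00 : v 0 ≠ 0 := fun h => by rw [h] at hv2; norm_num at hv2
    have e0 : b 0 = 0 := by
      rw [e1, e2, e3] at h2
      have : v 0 * b 0 = 0 := by linarith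
      exact (mul_eq_zero.1 this).resolve_left hv00
    exact h3 (funext fun i => by fin_cases i <;> assumption)


/-- The paper's Lemma 3.3 in the hyperboloid model: given three linearly
independent vectors `w i` whose dual planes meet at a point `v` of the upper
hyperboloid, and prescribed positive values `c i`, there is a unique vector
`u` of the upper light cone with `⟪u, w i⟫ = c i` for all `i`. -/
theorem stmt_9 (w : Fin 3 → Fin 4 → ℝ)
    (hw : LinearIndependent ℝ w)
    (hv : ∃ v : Fin 4 → ℝ, mink v v = -1 ∧ ∀ i : Fin 3, mink v (w i) = 0)
    (c : Fin 3 → ℝ) (hc : ∀ i, 0 < c i) :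
    ∃! u : Fin 4 → ℝ,
      mink u u = 0 ∧ 0 < u 0 ∧ ∀ i : Fin 3, mink u (w i) = c i := by
  obtain ⟨v, hQv, hvw⟩ := hv
  -- v is not in the span of the w's
  have hvnot : v ∉ Submodule.span ℝ (Set.range w) := by
    intro hmem
    have hle : Submodule.span ℝ (Set.range w) ≤ LinearMap.ker (minkL v) := by
      rw [Submodule.span_le]
      rintro _ ⟨i, rfl⟩
      exact hvw i
    have : minkL v v = 0 := hle hmem
    rw [show minkL v v = mink v v from rfl, hQv] at this
    norm_num at this
  -- the matrix with rows v, w 0, w 1, w 2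
  set M : Matrix (Fin 4) (Fin 4) ℝ := Matrix.of (Fin.cons v w) with hM
  have hMli : LinearIndependent ℝ (fun i => M i) := by
    show LinearIndependent ℝ (Fin.cons v w)
    exact linearIndependent_fin_cons.2 ⟨hw, hvnot⟩
  have hMu : IsUnit M := Matrix.linearIndependent_rows_iff_isUnit.1 hMli
  set A : Matrix (Fin 4) (Fin 4) ℝ := M * eta with hA
  have hAu : IsUnit A := hMu.mul eta_unit
  have hAdet : IsUnit A.det := (Matrix.isUnit_iff_isUnit_det A).1 hAu
  have hAinj : Function.Injective A.mulVec := Matrix.mulVec_injective_iff_isUnit.2 hAu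
  -- mulVec computes mink against the rows
  have hrow : ∀ x : Fin 4 → ℝ, ∀ j : Fin 4, (A *ᵥ x) j = mink (M j) x := by
    intro x j
    rw [hA, ← Matrix.mulVec_mulVec, mink_eq_dot]
    rfl
  -- the family of candidate solutions
  set p : ℝ → (Fin 4 → ℝ) := fun t => A⁻¹ *ᵥ Fin.cons t c with hp
  have hAp : ∀ t, A *ᵥ p t = Fin.cons t c := by
    intro t
    rw [hp]
    simp only
    rw [Matrix.mulVec_mulVec, Matrix.mul_nonsing_inv A hAdet, Matrix.one_mulVec]
  have hpv : ∀ t, mink v (p t) = t := by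
    intro t
    have := congrFun (hAp t) 0
    rwa [hrow, show M 0 = v from rfl, Fin.cons_zero] at this
  have hpw : ∀ t i, mink (p t) (w i) = c i := by
    intro t i
    have := congrFun (hAp t) i.succ
    rw [hrow, show M i.succ = w i from rfl, Fin.cons_succ] at this
    rwa [mink_symm]
  -- A *ᵥ v
  have hAv : A *ᵥ v = Fin.cons (-1) 0 := by
    funext j
    rw [hrow]
    refine Fin.cases ?_ (fun i => ?_) j
    · rw [show M 0 = v from rfl, Fin.cons_zero]; exact hQv
    · rw [show M i.succ = w i from rfl, Fin.cons_succ, mink_symm]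
      simp [hvw i]
  -- p t = p 0 - t • v
  have hpt : ∀ t, p t = p 0 - t • v := by
    intro t
    apply hAinj
    rw [hAp, Matrix.mulVec_sub, Matrix.mulVec_smul, hAp 0, hAv]
    funext j
    refine Fin.cases ?_ (fun i => ?_) j
    · simp
    · simp
  set b : Fin 4 → ℝ := p 0 with hb
  have hvb : mink v b = 0 := hpv 0
  have hbne : b ≠ 0 := by
    intro h
    have := hpw 0 0
    rw [← hb, h] at this
    simp [mink] at this
    linarith [hc 0]
  have hQb : 0 < mink b b := by
    have hkey := key_lemma_s9 v b hQv hvb hbne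
    have hv0 : 1 ≤ (v 0)^2 := by
      simp only [mink] at hQv
      nlinarith [sq_nonneg (v 1), sq_nonneg (v 2), sq_nonneg (v 3)]
    nlinarith [sq_nonneg (b 0)]
  set s : ℝ := Real.sqrt (mink b b) with hsdef
  have hs : 0 < s := Real.sqrt_pos.2 hQb
  have hs2 : s^2 = mink b b := Real.sq_sqrt hQb.le
  -- quadratic in t
  have hq : ∀ t, mink (p t) (p t) = mink b b - t^2 := by
    intro t
    rw [hpt t, mink_expand, hQv, mink_symm b v, hvb]
    ring
  have hp0 : ∀ t, (p t) 0 = b 0 - t * v 0 := by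
    intro t
    rw [hpt t]
    simp
  -- the two candidate zeroth coordinates have negative product
  have hprod : (p s) 0 * (p (-s)) 0 < 0 := by
    have hkey := key_lemma_s9 v b hQv hvb hbne
    rw [hp0, hp0]
    have : s^2 * (v 0)^2 = mink b b * (v 0)^2 := by rw [hs2]
    nlinarith [hkey]
  -- characterization of solutions
  have char : ∀ u : Fin 4 → ℝ,
      (mink u u = 0 ∧ 0 < u 0 ∧ ∀ i : Fin 3, mink u (w i) = c i) →
      (u = p s ∨ u = p (-s)) := by
    rintro u ⟨h0, _, hwi⟩
    set t : ℝ := mink v u with ht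
    have hu : u = p t := by
      apply hAinj
      rw [hAp]
      funext j
      rw [hrow]
      refine Fin.cases ?_ (fun i => ?_) j
      · rw [show M 0 = v from rfl, Fin.cons_zero, ← ht]
      · rw [show M i.succ = w i from rfl, Fin.cons_succ, mink_symm, hwi i]
    have hts : t^2 = s^2 := by
      rw [hs2]
      have := hq t
      rw [← hu] at this
      linarith [h0, this]
    have : (t - s) * (t + s) = 0 := by ring_nf; nlinarith [hts]
    rcases mul_eq_zero.1 this with h | h
    · left; rw [hu, show t = s by linarith]
    · right; rw [hu, show t = -s by linarith]
  -- properties of the candidates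
  have hcand : ∀ t, mink (p t) (p t) = mink b b - t^2 ∧ ∀ i, mink (p t) (w i) = c i :=
    fun t => ⟨hq t, hpw t⟩
  by_cases hsign : 0 < (p s) 0
  · refine ⟨p s, ⟨by rw [hq, hs2]; ring, hsign, hpw s⟩, ?_⟩
    intro u hu
    rcases char u hu with h | h
    · exact h
    · exfalso
      have : 0 < (p (-s)) 0 := h ▸ hu.2.1
      nlinarith [hprod]
  · have hneg : 0 < (p (-s)) 0 := by
      rcases lt_trichotomy ((p s) 0) 0 with h | h | h
      · nlinarith [hprod]
      · rw [h] at hprod; norm_num at hprod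
      · exact absurd h hsign
    refine ⟨p (-s), ⟨by rw [hq, neg_pow, hs2]; ring, hneg, hpw (-s)⟩, ?_⟩
    intro u hu
    rcases char u hu with h | h
    · exfalso
      have : 0 < (p s) 0 := h ▸ hu.2.1
      exact hsign this
    · exact h
end

section
/- Let α, β, γ ∈ (0, π). For t ∈ ℝ put u_α t = (Real.exp t − Real.cos α) / Real.sin α, and define F : ℝ × ℝ → ℝ by F (t, s) = (u_α t * u_β s + Real.cos γ) / (Real.sqrt (1 + (u_α t)^2) * Real.sqrt (1 + (u_β s)^2)). Then F (t, s) tends to 1 as t → +∞ and s → +∞ (i.e., Tendsto along the product filter atTop ×ˢ atTop). (This is the analytic content of the paper's Lemma 6.13(2): if h₁ − h₃ → +∞ and h₂ − h₃ → +∞, then the dihedral angle ω₃¹² of the brick tends to 0, since F = cos ω₃¹².) -/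
open Filter Real

lemma aux_sq_atTop : Filter.Tendsto (fun x : ℝ => 1 + x ^ 2) Filter.atTop Filter.atTop := by
  apply Filter.tendsto_atTop_add_const_left
  exact (tendsto_pow_atTop (by norm_num))

lemma aux_inv_zero : Filter.Tendsto (fun x : ℝ => 1 / Real.sqrt (1 + x ^ 2))
    Filter.atTop (nhds 0) := by
  simp only [one_div]
  have hsq : Filter.Tendsto Real.sqrt Filter.atTop Filter.atTop := by
    apply Filter.tendsto_atTop_atTop_of_monotone (fun a b h => Real.sqrt_le_sqrt h)
    intro b
    exact ⟨b ^ 2, by rw [Real.sqrt_sq_eq_abs]; exact le_abs_self b⟩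
  exact (hsq.comp aux_sq_atTop).inv_tendsto_atTop

lemma aux_main : Filter.Tendsto (fun x : ℝ => x / Real.sqrt (1 + x ^ 2))
    Filter.atTop (nhds 1) := by
  have h : Filter.Tendsto (fun x : ℝ => Real.sqrt (1 - 1 / (1 + x ^ 2)))
      Filter.atTop (nhds 1) := by
    have h0 : Filter.Tendsto (fun x : ℝ => 1 - 1 / (1 + x ^ 2)) Filter.atTop (nhds 1) := by
      have := (aux_sq_atTop.inv_tendsto_atTop (α := ℝ)).const_sub 1
      simpa [one_div] using this
    have := (Real.continuous_sqrt.tendsto 1).comp h0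
    simpa [Function.comp_def] using this
  apply h.congr'
  filter_upwards [Filter.eventually_ge_atTop (0 : ℝ)] with x hx
  have hpos : (0 : ℝ) < 1 + x ^ 2 := by positivity
  have : 1 - 1 / (1 + x ^ 2) = x ^ 2 / (1 + x ^ 2) := by field_simp; ring
  rw [this, Real.sqrt_div (by positivity), Real.sqrt_sq hx]

/-- Degeneration of corners, paper's Lemma 6.13(2): with
`u_α t = (exp t - cos α)/sin α`, the quantity
`F (t,s) = (u_α t * u_β s + cos γ) / (√(1+(u_α t)²) * √(1+(u_β s)²))`
tends to `1` as `t → +∞` and `s → +∞`. -/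
theorem stmt_11 (α β γ : ℝ)
    (hα : α ∈ Set.Ioo 0 Real.pi) (hβ : β ∈ Set.Ioo 0 Real.pi)
    (hγ : γ ∈ Set.Ioo 0 Real.pi) :
    Filter.Tendsto
      (fun q : ℝ × ℝ =>
        (((Real.exp q.1 - Real.cos α) / Real.sin α) *
            ((Real.exp q.2 - Real.cos β) / Real.sin β) + Real.cos γ) /
          (Real.sqrt (1 + ((Real.exp q.1 - Real.cos α) / Real.sin α) ^ 2) *
            Real.sqrt (1 + ((Real.exp q.2 - Real.cos β) / Real.sin β) ^ 2)))
      (Filter.atTop ×ˢ Filter.atTop)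
      (nhds 1) := by
  have hsα : 0 < Real.sin α := Real.sin_pos_of_pos_of_lt_pi hα.1 hα.2
  have hsβ : 0 < Real.sin β := Real.sin_pos_of_pos_of_lt_pi hβ.1 hβ.2
  set u : ℝ → ℝ := fun t => (Real.exp t - Real.cos α) / Real.sin α with hu
  set v : ℝ → ℝ := fun t => (Real.exp t - Real.cos β) / Real.sin β with hv
  have hut : Filter.Tendsto u Filter.atTop Filter.atTop := by
    apply Filter.Tendsto.atTop_div_const hsα
    exact Filter.tendsto_atTop_add_const_right _ _ Real.tendsto_exp_atTop
  have hvt : Filter.Tendsto v Filter.atTop Filter.atTop := by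
    apply Filter.Tendsto.atTop_div_const hsβ
    exact Filter.tendsto_atTop_add_const_right _ _ Real.tendsto_exp_atTop
  have key : Filter.Tendsto
      (fun q : ℝ × ℝ =>
        (u q.1 / Real.sqrt (1 + (u q.1) ^ 2)) * (v q.2 / Real.sqrt (1 + (v q.2) ^ 2)) +
          Real.cos γ * ((1 / Real.sqrt (1 + (u q.1) ^ 2)) * (1 / Real.sqrt (1 + (v q.2) ^ 2))))
      (Filter.atTop ×ˢ Filter.atTop) (nhds (1 * 1 + Real.cos γ * (0 * 0))) := by
    have hf : Filter.Tendsto Prod.fst (Filter.atTop ×ˢ Filter.atTop : Filter (ℝ × ℝ))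
        Filter.atTop := Filter.tendsto_fst
    have hs : Filter.Tendsto Prod.snd (Filter.atTop ×ˢ Filter.atTop : Filter (ℝ × ℝ))
        Filter.atTop := Filter.tendsto_snd
    have h1 := (aux_main.comp hut).comp hf
    have h2 := (aux_main.comp hvt).comp hs
    have h3 := (aux_inv_zero.comp hut).comp hf
    have h4 := (aux_inv_zero.comp hvt).comp hs
    exact (h1.mul h2).add (((h3.mul h4)).const_mul _)
  have e1 : (1:ℝ) * 1 + Real.cos γ * (0 * 0) = 1 := by ring
  rw [e1] at key
  refine key.congr fun q => ?_
  have hA : (0:ℝ) < Real.sqrt (1 + (u q.1) ^ 2) := Real.sqrt_pos.2 (by positivity)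
  have hB : (0:ℝ) < Real.sqrt (1 + (v q.2) ^ 2) := Real.sqrt_pos.2 (by positivity)
  show u q.1 / Real.sqrt (1 + (u q.1) ^ 2) * (v q.2 / Real.sqrt (1 + (v q.2) ^ 2)) +
        Real.cos γ * (1 / Real.sqrt (1 + (u q.1) ^ 2) * (1 / Real.sqrt (1 + (v q.2) ^ 2))) =
      (u q.1 * v q.2 + Real.cos γ) /
        (Real.sqrt (1 + (u q.1) ^ 2) * Real.sqrt (1 + (v q.2) ^ 2))
  generalize u q.1 = a at *
  generalize v q.2 = b at *
  generalize Real.sqrt (1 + a ^ 2) = A at *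
  generalize Real.sqrt (1 + b ^ 2) = B at *
  field_simp
end

section
/- Let n ≥ 1, let 𝟙 = (1,1,…,1) ∈ ℝⁿ, let L = ℝ • 𝟙 be the line it spans, and let H = {x ∈ ℝⁿ : ∑ i, x i = 0}. Let X ⊆ ℝⁿ be saturated under L (x ∈ X → x + t • 𝟙 ∈ X for all t ∈ ℝ), and let f : X → ℝ be invariant under L (f (x + t • 𝟙) = f x whenever both points lie in X). Fix m (a natural number or ∞). Then the restriction of f to X ∩ H extends to a C^m function on an open neighborhood (in the hyperplane H) of X ∩ H if and only if f extends to a C^m function on an open neighborhood of X in ℝⁿ. (This is the paper's Lemma 4.2: a function on the quotient space M* = M*_tr / L is C^m iff its pullback to M*_tr is C^m.) -/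
noncomputable def projAux (n : ℕ) : (Fin n → ℝ) →ₗ[ℝ] (Fin n → ℝ) where
  toFun x := x - ((∑ i, x i) / n) • (fun _ => (1 : ℝ))
  map_add' x y := by
    funext j
    simp only [Pi.add_apply, Pi.sub_apply, Pi.smul_apply, smul_eq_mul, mul_one,
      Finset.sum_add_distrib, add_div]
    ring
  map_smul' c x := by
    funext j
    simp only [Pi.smul_apply, Pi.sub_apply, smul_eq_mul, mul_one, RingHom.id_apply,
      ← Finset.mul_sum]
    ring

lemma projAux_apply (n : ℕ) (x : Fin n → ℝ) :
    projAux n x = x + (-((∑ i, x i) / n)) • (fun _ => (1 : ℝ)) := by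
  simp [projAux, sub_eq_add_neg, neg_smul]

/-- The paper's Lemma 4.2: let `𝟙 = (1,…,1)`, let `H` be the hyperplane
`{x : ∑ i, x i = 0}`, let `X ⊆ ℝⁿ` be saturated under the line `ℝ • 𝟙` and
let `f` be invariant under translations along `𝟙` on `X`.  Then the
restriction of `f` to `X ∩ H` extends to a `C^m` function on an open
neighborhood (inside `H`) of `X ∩ H` if and only if `f` extends to a `C^m`
function on an open neighborhood of `X` in `ℝⁿ`. -/
theorem stmt_13 (n : ℕ) (hn : 1 ≤ n) (m : ℕ∞)
    (H : Submodule ℝ (Fin n → ℝ))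
    (hH : ∀ x : Fin n → ℝ, x ∈ H ↔ ∑ i, x i = 0)
    (X : Set (Fin n → ℝ))
    (hXsat : ∀ x ∈ X, ∀ t : ℝ, x + t • (fun _ => (1 : ℝ)) ∈ X)
    (f : (Fin n → ℝ) → ℝ)
    (hfinv : ∀ x ∈ X, ∀ t : ℝ, f (x + t • (fun _ => (1 : ℝ))) = f x) :
    (∃ (U : Set H) (g : H → ℝ),
        IsOpen U ∧ {y : H | (y : Fin n → ℝ) ∈ X} ⊆ U ∧ ContDiffOn ℝ m g U ∧
          ∀ y : H, (y : Fin n → ℝ) ∈ X → g y = f y) ↔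
    (∃ (Y : Set (Fin n → ℝ)) (g : (Fin n → ℝ) → ℝ),
        IsOpen Y ∧ X ⊆ Y ∧ ContDiffOn ℝ m g Y ∧ ∀ x ∈ X, g x = f x) := by
  have hn' : (n : ℝ) ≠ 0 := by positivity
  have hmem : ∀ x, projAux n x ∈ H := by
    intro x
    rw [hH]
    simp [projAux, Finset.sum_sub_distrib, Finset.sum_const, hn', mul_comm]
    field_simp
    ring
  set p : (Fin n → ℝ) →ₗ[ℝ] H := LinearMap.codRestrict H (projAux n) hmem with hp
  have hpc : ContDiff ℝ m p := (LinearMap.toContinuousLinearMap p).contDiff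
  constructor
  · rintro ⟨U, g, hUo, hXU, hgc, hgf⟩
    refine ⟨p ⁻¹' U, g ∘ p, hUo.preimage (LinearMap.toContinuousLinearMap p).continuous, ?_, ?_, ?_⟩
    · intro x hx
      have : ((p x : H) : Fin n → ℝ) ∈ X := by
        show projAux n x ∈ X
        rw [projAux_apply]
        exact hXsat x hx _
      exact hXU this
    · exact hgc.comp hpc.contDiffOn (Set.mapsTo_preimage _ _)
    · intro x hx
      have hmemX : ((p x : H) : Fin n → ℝ) ∈ X := by
        show projAux n x ∈ X
        rw [projAux_apply]
        exact hXsat x hx _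
      have := hgf (p x) hmemX
      rw [Function.comp_apply, this]
      show f (projAux n x) = f x
      rw [projAux_apply]
      exact hfinv x hx _
  · rintro ⟨Y, g, hYo, hXY, hgc, hgf⟩
    refine ⟨Subtype.val ⁻¹' Y, g ∘ Subtype.val, hYo.preimage continuous_subtype_val, ?_, ?_, ?_⟩
    · intro y hy; exact hXY hy
    · exact hgc.comp (H.subtypeL.contDiff.contDiffOn) (Set.mapsTo_preimage _ _)
    · intro y hy; exact hgf _ hy
end
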